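/- Let X be a finite-dimensional real normed space and let K, A ⊂ X satisfy condition (H) with A ⊂ int K and A + (K \ {0}) ⊂ int A. Then σ_A is (Fréchet) differentiable at every point of int K⁻ if and only if A is convex and for all a, a' ∈ bd A with a ≠ a' and all λ ∈ (0,1) one has λa + (1−λ)a' ∉ bd A. -/

import Mathlib

/-!
A functional `f ∈ int K⁻` is coercive on `K`, and so is every functional near it; hence
`σ_A(y) = y (m y)` for a maximiser `m y ∈ A` lying in a fixed compact set. If the maximiser of
`f` is unique, compactness makes `m` continuous at `f`, and the squeeze
`0 ≤ σ_A(y) - σ_A(f) - (y - f)(m f) ≤ (y - f)(m y - m f)` shows that `σ_A` is differentiable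
with gradient `m f`. A maximiser of a nonzero functional lies on `bd A`, so for convex `A`
two distinct maximisers would produce a boundary segment whose midpoint is again a maximiser.

Conversely, if `σ_A` is differentiable at `f`, every point of the closed convex hull `C` at
which `f` attains `σ_A(f)` is its gradient, hence there is only one. Push `x ∈ C` along `-a₀`
(`a₀ ∈ A`) to a boundary point `e` of `C` and take a supporting functional at `e`. Perturbing
it by a coercive functional shows that it attains its supremum on `A`, at some `b`; since
`A + (K \ {0}) ⊆ int A` it is then strictly negative on `K \ {0}`, so it lies in `int K⁻`.
Therefore `e = b ∈ A` and `x ∈ A + K = A`, so `A = C` is convex, and the same uniqueness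
applied at a boundary point inside a boundary segment rules out such segments.
-/

open Set Filter Topology Pointwise

variable {X : Type*} [NormedAddCommGroup X] [NormedSpace ℝ X]

/-- The support function `σ_A : X* → ℝ ∪ {+∞}`. -/
noncomputable def supportFn (A : Set X) (f : X →L[ℝ] ℝ) : EReal :=
  ⨆ a ∈ A, (f a : EReal)

/-- The negative dual cone `K⁻ = {x* : ⟨k, x*⟩ ≤ 0 for all k ∈ K}`. -/
def negDual (K : Set X) : Set (X →L[ℝ] ℝ) := {f | ∀ x ∈ K, f x ≤ 0}

/-- `σ_A` is (Fréchet) differentiable at `f`: there is a real-valued function agreeing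
with `σ_A` on a neighbourhood of `f` which is differentiable at `f`. -/
def SigmaDiffAt (A : Set X) (f : X →L[ℝ] ℝ) : Prop :=
  ∃ g : (X →L[ℝ] ℝ) → ℝ, (∀ᶠ y in 𝓝 f, ((g y : ℝ) : EReal) = supportFn A y) ∧
    DifferentiableAt ℝ g f

/-- `int_K A`: the interior of `A` in the subspace topology of `K`. -/
def intWithin (K A : Set X) : Set X :=
  {x ∈ K | ∃ U : Set X, IsOpen U ∧ x ∈ U ∧ K ∩ U ⊆ A}

section Topology

variable {α β γ : Type*} [TopologicalSpace α] [TopologicalSpace β]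

theorem Filter.Tendsto.mapClusterPt_prodMk {F : Filter γ} {u : γ → α} {v : γ → β} {x : α}
    {y : β} (hu : Tendsto u F (𝓝 x)) (hv : MapClusterPt y F v) :
    MapClusterPt (x, y) F fun c => (u c, v c) := by
  refine mapClusterPt_iff_frequently.mpr fun s hs => ?_
  obtain ⟨U, hU, V, hV, hUV⟩ := mem_nhds_prod_iff.mp hs
  exact ((hv.frequently hV).and_eventually (hu hU)).mono fun c hc => hUV ⟨hc.2, hc.1⟩

theorem IsPreconnected.inter_frontier_nonempty {s t : Set α} (hs : IsPreconnected s)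
    (hst : (s ∩ t).Nonempty) (hst' : (s \ t).Nonempty) : (s ∩ frontier t).Nonempty := by
  by_contra h
  rw [not_nonempty_iff_eq_empty, eq_empty_iff_forall_notMem] at h
  have hcover : s ⊆ interior t ∪ (closure t)ᶜ := fun z hz => by
    by_contra hz'
    simp only [mem_union, mem_compl_iff, not_or, not_not] at hz'
    exact h z ⟨hz, hz'.2, hz'.1⟩
  obtain ⟨x, hxs, hxt⟩ := hst
  obtain ⟨y, hys, hyt⟩ := hst'
  obtain ⟨z, -, hz, hz'⟩ := hs _ _ isOpen_interior isClosed_closure.isOpen_compl hcover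
    ⟨x, hxs, (hcover hxs).resolve_right (not_not.mpr (subset_closure hxt))⟩
    ⟨y, hys, (hcover hys).resolve_left fun hy => hyt (interior_subset hy)⟩
  exact hz' (interior_subset_closure hz)

end Topology

theorem le_supportFn {A : Set X} {a : X} (ha : a ∈ A) (y : X →L[ℝ] ℝ) :
    (y a : EReal) ≤ supportFn A y :=
  le_iSup₂ (f := fun a (_ : a ∈ A) => (y a : EReal)) a ha

theorem supportFn_le {A : Set X} {y : X →L[ℝ] ℝ} {r : ℝ} (h : ∀ a ∈ A, y a ≤ r) :
    supportFn A y ≤ r :=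
  iSup₂_le fun a ha => EReal.coe_le_coe_iff.mpr (h a ha)

theorem supportFn_eq_of_isMaxOn {A : Set X} {y : X →L[ℝ] ℝ} {m : X} (hm : m ∈ A)
    (hmax : IsMaxOn y A m) : supportFn A y = y m :=
  (supportFn_le (isMaxOn_iff.mp hmax)).antisymm (le_supportFn hm y)

theorem le_of_mem_closure_convexHull {A : Set X} {y : X →L[ℝ] ℝ} {r : ℝ}
    (h : ∀ a ∈ A, y a ≤ r) {c : X} (hc : c ∈ closure (convexHull ℝ A)) : y c ≤ r :=
  closure_minimal (convexHull_min h (convex_halfSpace_le y.toLinearMap.isLinear r))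
    (isClosed_le y.continuous continuous_const) hc

theorem SigmaDiffAt.eq_of_isMaxOn {A : Set X} {f : X →L[ℝ] ℝ} (hd : SigmaDiffAt A f)
    {c c' : X} (hc : c ∈ closure (convexHull ℝ A)) (hc' : c' ∈ closure (convexHull ℝ A))
    (hmc : IsMaxOn f A c) (hmc' : IsMaxOn f A c') : c = c' := by
  obtain ⟨g, hg, hgd⟩ := hd
  have hub : ∀ᶠ y in 𝓝 f, ∀ d ∈ closure (convexHull ℝ A), y d ≤ g y := by
    filter_upwards [hg] with y hy d hd
    exact le_of_mem_closure_convexHull (fun a ha => EReal.coe_le_coe_iff.mp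
      (hy ▸ le_supportFn ha y)) hd
  -- `g - d` has a local minimum at `f`, so the derivative of `g` there is evaluation at `d`.
  have hderiv : ∀ d ∈ closure (convexHull ℝ A), IsMaxOn f A d →
      fderiv ℝ g f = ContinuousLinearMap.apply ℝ ℝ d := by
    intro d hd hmd
    have hgf : g f ≤ f d := EReal.coe_le_coe_iff.mp
      (hg.self_of_nhds ▸ supportFn_le (isMaxOn_iff.mp hmd))
    have hmin : IsLocalMin (fun y => g y - ContinuousLinearMap.apply ℝ ℝ d y) f := by
      filter_upwards [hub] with y hy
      simp only [ContinuousLinearMap.apply_apply]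
      linarith [hy d hd]
    exact sub_eq_zero.mp <| hmin.hasFDerivAt_eq_zero <|
      hgd.hasFDerivAt.sub (ContinuousLinearMap.apply ℝ ℝ d).hasFDerivAt
  have happly := (hderiv c hc hmc).symm.trans (hderiv c' hc' hmc')
  exact SeparatingDual.eq_iff_forall_dual_eq.mpr fun φ =>
    congrArg (fun L : (X →L[ℝ] ℝ) →L[ℝ] ℝ => L φ) happly

section Cone

variable {K : Set X}

theorem exists_ball_le_neg_mul_norm {f : X →L[ℝ] ℝ} (hf : f ∈ interior (negDual K)) :
    ∃ δ > 0, ∀ y ∈ Metric.ball f δ, ∀ k ∈ K, y k ≤ -δ * ‖k‖ := by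
  obtain ⟨ε, hε, hball⟩ := Metric.isOpen_iff.mp isOpen_interior f hf
  refine ⟨ε / 2, half_pos hε, fun y hy k hk => ?_⟩
  rcases eq_or_ne k 0 with rfl | hk0
  · simp
  obtain ⟨φ, hφ, hφk⟩ := exists_dual_vector ℝ k (norm_ne_zero_iff.mpr hk0)
  have hmem : y + (ε / 2) • φ ∈ negDual K := interior_subset <| hball <| Metric.mem_ball.mpr <|
    calc dist (y + (ε / 2) • φ) f ≤ dist (y + (ε / 2) • φ) y + dist y f := dist_triangle _ _ _
      _ = ε / 2 + dist y f := by
        rw [dist_self_add_left, norm_smul, hφ, mul_one, Real.norm_of_nonneg (half_pos hε).le]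
      _ < ε / 2 + ε / 2 := by gcongr; exact hy
      _ = ε := add_halves ε
  have := hmem k hk
  simp only [add_apply, smul_apply, hφk, smul_eq_mul, RCLike.ofReal_real_eq_id, id] at this
  linarith

theorem lt_zero_of_mem_interior_negDual {f : X →L[ℝ] ℝ} (hf : f ∈ interior (negDual K))
    {k : X} (hk : k ∈ K) (hk0 : k ≠ 0) : f k < 0 := by
  obtain ⟨δ, hδ, h⟩ := exists_ball_le_neg_mul_norm hf
  nlinarith [h f (Metric.mem_ball_self hδ) k hk, norm_pos_iff.mpr hk0]

theorem mem_interior_negDual_of_le_neg_mul_norm {f : X →L[ℝ] ℝ} {δ : ℝ} (hδ : 0 < δ)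
    (hf : ∀ k ∈ K, f k ≤ -δ * ‖k‖) : f ∈ interior (negDual K) := by
  refine mem_interior.mpr ⟨Metric.ball f δ, fun y hy k hk => ?_, Metric.isOpen_ball,
    Metric.mem_ball_self hδ⟩
  have h1 : (y - f) k ≤ ‖y - f‖ * ‖k‖ := (le_abs_self _).trans ((y - f).le_opNorm k)
  have h2 : ‖y - f‖ ≤ δ := (mem_ball_iff_norm.mp hy).le
  have h3 : y k = f k + (y - f) k := by simp
  nlinarith [hf k hk, mul_le_mul_of_nonneg_right h2 (norm_nonneg k)]

theorem mem_interior_negDual_of_neg_on_sphere [ProperSpace X] (hKclosed : IsClosed K)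
    (hKcone : ∀ t : ℝ, 0 ≤ t → ∀ x ∈ K, t • x ∈ K) {f : X →L[ℝ] ℝ}
    (hf : ∀ s ∈ K ∩ Metric.sphere 0 1, f s < 0) : f ∈ interior (negDual K) := by
  obtain ⟨δ, hδ, hfδ⟩ := ((isCompact_sphere (0 : X) 1).inter_left hKclosed).exists_forall_le'
    (f := fun x => -f x) (by fun_prop) (a := 0) fun s hs => neg_pos.mpr (hf s hs)
  refine mem_interior_negDual_of_le_neg_mul_norm hδ fun k hk => ?_
  rcases eq_or_ne k 0 with rfl | hk0
  · simp
  have hkpos : 0 < ‖k‖ := norm_pos_iff.mpr hk0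
  have hs := hfδ (‖k‖⁻¹ • k) ⟨hKcone _ (inv_nonneg.mpr hkpos.le) k hk, by
    simp [norm_smul, hkpos.ne']⟩
  simp only [map_smul, smul_eq_mul] at hs
  calc f k = ‖k‖ * (‖k‖⁻¹ * f k) := by field_simp
    _ ≤ ‖k‖ * (-δ) := by gcongr; linarith
    _ = -δ * ‖k‖ := by ring

theorem exists_mem_negDual_lt_zero (hKconv : Convex ℝ K) (hKclosed : IsClosed K)
    (hKcone : ∀ t : ℝ, 0 ≤ t → ∀ x ∈ K, t • x ∈ K) (hKpointed : K ∩ (-K) = {0})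
    {s : X} (hs : s ∈ K) (hs0 : s ≠ 0) : ∃ φ ∈ negDual K, φ s < 0 := by
  have hsK : s ∉ -K := fun h => hs0 (hKpointed.subset ⟨hs, h⟩)
  obtain ⟨φ, u, hφs, hφK⟩ := geometric_hahn_banach_point_closed hKconv.neg hKclosed.neg hsK
  have hu : u < 0 := by simpa using hφK 0 (by simpa using hKcone 0 le_rfl s hs)
  refine ⟨φ, fun k hk => ?_, hφs.trans hu⟩
  by_contra! hpos
  have := hφK (-((-u / φ k) • k))
    (by simpa using hKcone _ (div_nonneg (neg_nonneg.mpr hu.le) hpos.le) k hk)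
  simp [hpos.ne'] at this

theorem interior_negDual_nonempty [ProperSpace X] (hKconv : Convex ℝ K)
    (hKclosed : IsClosed K) (hKcone : ∀ t : ℝ, 0 ≤ t → ∀ x ∈ K, t • x ∈ K)
    (hKpointed : K ∩ (-K) = {0}) : (interior (negDual K)).Nonempty := by
  classical
  have hS : IsCompact (K ∩ Metric.sphere (0 : X) 1) := (isCompact_sphere 0 1).inter_left hKclosed
  have hcover : K ∩ Metric.sphere 0 1 ⊆ ⋃ φ ∈ negDual K, {x | φ x < 0} := fun s hs => by
    obtain ⟨φ, hφ, hφs⟩ := exists_mem_negDual_lt_zero hKconv hKclosed hKcone hKpointed hs.1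
      (ne_zero_of_mem_sphere one_ne_zero ⟨s, hs.2⟩)
    exact mem_iUnion₂.mpr ⟨φ, hφ, hφs⟩
  obtain ⟨t, htK, htfin, htS⟩ :=
    hS.elim_finite_subcover_image (fun φ _ => isOpen_lt φ.continuous continuous_const) hcover
  refine ⟨∑ φ ∈ htfin.toFinset, φ, mem_interior_negDual_of_neg_on_sphere hKclosed hKcone
    fun s hs => ?_⟩
  obtain ⟨φ, hφt, hφs⟩ := mem_iUnion₂.mp (htS hs)
  rw [sum_apply, ← Finset.sum_const_zero (s := htfin.toFinset)]
  exact Finset.sum_lt_sum (fun ψ hψ => htK (htfin.mem_toFinset.mp hψ) s hs.1)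
    ⟨φ, htfin.mem_toFinset.mpr hφt, hφs⟩

end Cone

theorem exists_isMaxOn_of_le_sub_mul_norm {E : Type*} [NormedAddCommGroup E] [ProperSpace E]
    {A : Set E} (hA : IsClosed A) (hAne : A.Nonempty) {φ : E → ℝ} (hφ : Continuous φ) {r c : ℝ}
    (hc : 0 < c) (hle : ∀ a ∈ A, φ a ≤ r - c * ‖a‖) : ∃ m ∈ A, IsMaxOn φ A m := by
  obtain ⟨a₀, ha₀⟩ := hAne
  refine hφ.continuousOn.exists_isMaxOn' hA ha₀ ?_
  filter_upwards [(tendsto_norm_cocompact_atTop.eventually_ge_atTop ((r - φ a₀) / c)).filter_mono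
    inf_le_left, mem_inf_of_right (mem_principal_self A)] with x hx hxA
  rw [div_le_iff₀ hc] at hx
  linarith [hle x hxA]

theorem IsMaxOn.apply_lt_of_mem_interior {A : Set X} {f : X →L[ℝ] ℝ} (hf : f ≠ 0) {b c : X}
    (hb : IsMaxOn f A b) (hc : c ∈ interior A) : f c < f b := by
  refine (isMaxOn_iff.mp hb c (interior_subset hc)).lt_of_ne fun hcb => hf ?_
  have hcmax : IsMaxOn f A c := isMaxOn_iff.mpr fun x hx => hcb ▸ isMaxOn_iff.mp hb x hx
  exact (hcmax.isLocalMax (mem_interior_iff_mem_nhds.mp hc)).hasFDerivAt_eq_zero f.hasFDerivAt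

theorem mem_interior_negDual_of_isMaxOn [ProperSpace X] {K A : Set X} (hKclosed : IsClosed K)
    (hKcone : ∀ t : ℝ, 0 ≤ t → ∀ x ∈ K, t • x ∈ K) (hssc : A + (K \ {0}) ⊆ interior A)
    {f : X →L[ℝ] ℝ} (hf : f ≠ 0) {b : X} (hb : b ∈ A) (hmax : IsMaxOn f A b) :
    f ∈ interior (negDual K) :=
  mem_interior_negDual_of_neg_on_sphere hKclosed hKcone fun s hs => by
    have hs0 : s ∉ ({0} : Set X) := ne_zero_of_mem_sphere one_ne_zero ⟨s, hs.2⟩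
    simpa using hmax.apply_lt_of_mem_interior hf (hssc (add_mem_add hb ⟨hs.1, hs0⟩))

theorem eq_of_isMaxOn_of_forall_notMem_frontier {A : Set X} (hconv : Convex ℝ A)
    (hseg : ∀ a ∈ frontier A, ∀ a' ∈ frontier A, a ≠ a' →
      ∀ t : ℝ, t ∈ Ioo (0 : ℝ) 1 → t • a + (1 - t) • a' ∉ frontier A)
    {f : X →L[ℝ] ℝ} (hf : f ≠ 0) {c c' : X} (hc : c ∈ A) (hc' : c' ∈ A)
    (hmc : IsMaxOn f A c) (hmc' : IsMaxOn f A c') : c = c' := by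
  have hfront : ∀ d ∈ A, IsMaxOn f A d → d ∈ frontier A := fun d hd hmd =>
    ⟨subset_closure hd, fun hint => (hmd.apply_lt_of_mem_interior hf hint).false⟩
  by_contra hne
  have hp : (1 / 2 : ℝ) • c + (1 - 1 / 2 : ℝ) • c' ∈ A :=
    hconv hc hc' (by norm_num) (by norm_num) (by norm_num)
  refine hseg c (hfront c hc hmc) c' (hfront c' hc' hmc') hne (1 / 2) ⟨by norm_num, by norm_num⟩
    (hfront _ hp (isMaxOn_iff.mpr fun x hx => ?_))
  simp only [map_add, map_smul, smul_eq_mul]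
  linarith [isMaxOn_iff.mp hmc x hx, isMaxOn_iff.mp hmc' x hx]

theorem tendsto_of_isMaxOn {P Y : Type*} [TopologicalSpace P] [TopologicalSpace Y]
    {φ : P → Y → ℝ} (hφ : Continuous (Function.uncurry φ)) {A Q : Set Y} (hA : IsClosed A)
    (hQ : IsCompact Q) {m : P → Y} {p₀ : P}
    (hm : ∀ᶠ p in 𝓝 p₀, m p ∈ A ∩ Q ∧ IsMaxOn (φ p) A (m p))
    (huniq : ∀ b ∈ A, IsMaxOn (φ p₀) A b → b = m p₀) : Tendsto m (𝓝 p₀) (𝓝 (m p₀)) := by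
  refine hQ.tendsto_nhds_of_unique_mapClusterPt (hm.mono fun p hp => hp.1.2) fun b _ hb =>
    huniq b (hA.mem_of_mapClusterPt hb (hm.mono fun p hp => hp.1.1))
      (isMaxOn_iff.mpr fun x hx => ?_)
  have hclosed : IsClosed {q : P × Y | φ q.1 x ≤ φ q.1 q.2} :=
    isClosed_le (hφ.comp (continuous_fst.prodMk continuous_const)) hφ
  exact hclosed.mem_of_mapClusterPt (tendsto_id.mapClusterPt_prodMk hb)
    (hm.mono fun p hp => isMaxOn_iff.mp hp.2 x hx)

theorem hasFDerivAt_apply_of_isMaxOn {A : Set X} {m : (X →L[ℝ] ℝ) → X} {f : X →L[ℝ] ℝ}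
    (hm : ∀ᶠ y in 𝓝 f, m y ∈ A ∧ IsMaxOn y A (m y)) (hcont : Tendsto m (𝓝 f) (𝓝 (m f))) :
    HasFDerivAt (fun y : X →L[ℝ] ℝ => y (m y)) (ContinuousLinearMap.apply ℝ ℝ (m f)) f := by
  obtain ⟨hmf, hfmax⟩ := hm.self_of_nhds
  refine HasFDerivAt.of_isLittleO (Asymptotics.isLittleO_iff.mpr fun c hc => ?_)
  filter_upwards [hm, hcont.eventually (Metric.closedBall_mem_nhds (m f) hc)]
    with y ⟨hyA, hymax⟩ hyc
  have hlow := isMaxOn_iff.mp hymax _ hmf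
  have hupp := isMaxOn_iff.mp hfmax _ hyA
  have hbound : (y - f) (m y - m f) ≤ ‖y - f‖ * c :=
    (le_abs_self _).trans <| ((y - f).le_opNorm _).trans <|
      mul_le_mul_of_nonneg_left (by rwa [← dist_eq_norm]) (norm_nonneg _)
  simp only [ContinuousLinearMap.apply_apply, map_sub, sub_apply] at hbound ⊢
  rw [Real.norm_eq_abs, abs_le]
  constructor <;> nlinarith [norm_nonneg (y - f)]

theorem sigmaDiffAt_of_isMaxOn_unique [ProperSpace X] {K A : Set X} (hAclosed : IsClosed A)
    (hAne : A.Nonempty) (hAK : A ⊆ K) {f : X →L[ℝ] ℝ} (hf : f ∈ interior (negDual K))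
    (huniq : ∀ c ∈ A, ∀ c' ∈ A, IsMaxOn f A c → IsMaxOn f A c' → c = c') :
    SigmaDiffAt A f := by
  obtain ⟨a₀, ha₀⟩ := hAne
  obtain ⟨δ, hδ, hball⟩ := exists_ball_le_neg_mul_norm hf
  have hmax : ∀ y ∈ Metric.ball f δ, ∃ m ∈ A, IsMaxOn y A m := fun y hy =>
    exists_isMaxOn_of_le_sub_mul_norm hAclosed ⟨a₀, ha₀⟩ y.continuous hδ (r := 0)
      fun a ha => by simpa using hball y hy a (hAK ha)
  choose! m hmA hmmax using hmax
  have hnear : ∀ᶠ y in 𝓝 f, y ∈ Metric.ball f δ := Metric.ball_mem_nhds f hδ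
  set R := (‖f‖ + δ) * ‖a₀‖ / δ
  have hbound : ∀ y ∈ Metric.ball f δ, ‖m y‖ ≤ R := fun y hy => by
    have h1 := hball y hy _ (hAK (hmA y hy))
    have h2 := isMaxOn_iff.mp (hmmax y hy) a₀ ha₀
    have h3 := neg_abs_le (y a₀) |>.trans' (neg_le_neg (y.le_opNorm a₀))
    have h4 := norm_lt_of_mem_ball hy
    rw [le_div_iff₀ hδ]
    nlinarith [mul_le_mul_of_nonneg_right h4.le (norm_nonneg a₀)]
  have hm : ∀ᶠ y in 𝓝 f, m y ∈ A ∩ Metric.closedBall 0 R ∧ IsMaxOn y A (m y) :=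
    hnear.mono fun y hy =>
      ⟨⟨hmA y hy, mem_closedBall_zero_iff.mpr (hbound y hy)⟩, hmmax y hy⟩
  have hfball : f ∈ Metric.ball f δ := Metric.mem_ball_self hδ
  have hcont : Tendsto m (𝓝 f) (𝓝 (m f)) :=
    tendsto_of_isMaxOn (φ := fun y x => y x) (continuous_fst.clm_apply continuous_snd) hAclosed
      (isCompact_closedBall (0 : X) R) hm fun b hb hbmax =>
        huniq b hb (m f) (hmA f hfball) hbmax (hmmax f hfball)
  refine ⟨fun y => y (m y), ?_,
    (hasFDerivAt_apply_of_isMaxOn (hm.mono fun y hy => ⟨hy.1.1, hy.2⟩) hcont).differentiableAt⟩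
  filter_upwards [hnear] with y hy
  exact (supportFn_eq_of_isMaxOn (hmA y hy) (hmmax y hy)).symm

theorem exists_isMaxOn_of_notMem_interior {C : Set X} (hC : Convex ℝ C)
    (hint : (interior C).Nonempty) {e : X} (he : e ∉ interior C) :
    ∃ f : X →L[ℝ] ℝ, f ≠ 0 ∧ IsMaxOn f C e := by
  obtain ⟨f, hf⟩ := geometric_hahn_banach_open_point hC.interior isOpen_interior he
  refine ⟨f, ?_, isMaxOn_iff.mpr fun x hx => ?_⟩
  · rintro rfl
    obtain ⟨u, hu⟩ := hint
    simpa using hf u hu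
  · have hhalf : closure (interior C) ⊆ {x | f x ≤ f e} :=
      closure_minimal (fun u hu => (hf u hu).le) (isClosed_le f.continuous continuous_const)
    exact hhalf (hC.closure_interior_eq_closure_of_nonempty_interior hint ▸ subset_closure hx)

theorem exists_sub_smul_mem_frontier {C : Set X} {g : X →L[ℝ] ℝ} (hg : ∀ c ∈ C, g c ≤ 0)
    {x v : X} (hx : x ∈ C) (hv : g v < 0) : ∃ s ≥ (0 : ℝ), x - s • v ∈ frontier C := by
  have hray : IsPreconnected ((fun s : ℝ => x - s • v) '' Ici 0) :=
    isPreconnected_Ici.image _ (by fun_prop)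
  -- far along the ray `g` becomes positive, so the ray leaves `C`
  set s₁ := g x / g v + 1
  have hs₁ : 0 ≤ s₁ := by
    have := div_nonneg_of_nonpos (hg x hx) hv.le
    linarith
  have hout : x - s₁ • v ∉ C := fun h => by
    have := hg _ h
    simp only [map_sub, map_smul, smul_eq_mul, s₁, add_mul, div_mul_cancel₀ _ hv.ne] at this
    linarith
  obtain ⟨_, ⟨s, hs, rfl⟩, hsC⟩ := hray.inter_frontier_nonempty
    ⟨x, ⟨0, mem_Ici.mpr le_rfl, by simp⟩, hx⟩ ⟨_, ⟨s₁, hs₁, rfl⟩, hout⟩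
  exact ⟨s, hs, hsC⟩

theorem IsMaxOn.exists_mem_apply_eq [ProperSpace X] {A : Set X} {f : X →L[ℝ] ℝ} {e : X}
    (hmax : IsMaxOn f A e) (he : e ∈ closure (convexHull ℝ A)) (hAclosed : IsClosed A)
    (hAne : A.Nonempty) {g : X →L[ℝ] ℝ} {δ : ℝ} (hδ : 0 < δ) (hg : ∀ a ∈ A, g a ≤ -δ * ‖a‖) :
    ∃ b ∈ A, f b = f e := by
  set S := {a ∈ A | g e ≤ g a}
  have hS : IsCompact S := by
    refine (isCompact_closedBall (0 : X) (-g e / δ)).of_isClosed_subset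
      (hAclosed.inter (isClosed_le continuous_const g.continuous)) fun a ha => ?_
    rw [mem_closedBall_zero_iff, le_div_iff₀ hδ]
    linarith [hg a ha.1, ha.2]
  -- the perturbation `f + t • g` is coercive, so it attains its maximum on `A`, inside `S`
  have happrox : ∀ t > 0, ∃ m ∈ S, f e + t * g e ≤ f m := by
    intro t ht
    obtain ⟨m, hmA, hm⟩ := exists_isMaxOn_of_le_sub_mul_norm hAclosed hAne (f + t • g).continuous
      (mul_pos ht hδ) (r := f e) fun a ha => by
        simp only [add_apply, smul_apply, smul_eq_mul]
        nlinarith [isMaxOn_iff.mp hmax a ha, hg a ha]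
    have hem := le_of_mem_closure_convexHull (isMaxOn_iff.mp hm) he
    simp only [add_apply, smul_apply, smul_eq_mul] at hem
    have hfm := isMaxOn_iff.mp hmax m hmA
    have hgm : g m ≤ 0 := by nlinarith [hg m hmA, norm_nonneg m]
    exact ⟨m, ⟨hmA, by nlinarith⟩, by nlinarith⟩
  obtain ⟨m₁, hm₁S, -⟩ := happrox 1 one_pos
  obtain ⟨b, hbS, hbmax⟩ := hS.exists_isMaxOn ⟨m₁, hm₁S⟩ f.continuous.continuousOn
  refine ⟨b, hbS.1, (isMaxOn_iff.mp hmax b hbS.1).antisymm ?_⟩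
  have hlim : Tendsto (fun t : ℝ => f e + t * g e) (𝓝[>] 0) (𝓝 (f e)) :=
    ((continuous_const.add (continuous_id.mul continuous_const)).tendsto' 0 (f e)
      (by simp)).mono_left nhdsWithin_le_nhds
  refine le_of_tendsto hlim (eventually_nhdsWithin_of_forall fun t ht => ?_)
  obtain ⟨m, hmS, hm⟩ := happrox t ht
  exact hm.trans (isMaxOn_iff.mp hbmax m hmS)

theorem closure_convexHull_subset_of_sigmaDiffAt [ProperSpace X] {K A : Set X}
    (hKconv : Convex ℝ K) (hKclosed : IsClosed K)
    (hKcone : ∀ t : ℝ, 0 ≤ t → ∀ x ∈ K, t • x ∈ K) (hKpointed : K ∩ (-K) = {0})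
    (hAne : A.Nonempty) (hAclosed : IsClosed A) (hAK : A + K ⊆ A) (hAsub : A ⊆ K \ {0})
    (hssc : A + (K \ {0}) ⊆ interior A)
    (hdiff : ∀ f ∈ interior (negDual K), SigmaDiffAt A f) :
    closure (convexHull ℝ A) ⊆ A := by
  set C := closure (convexHull ℝ A)
  have hAC : A ⊆ C := (subset_convexHull ℝ A).trans subset_closure
  obtain ⟨a₀, ha₀⟩ := hAne
  obtain ⟨g, hg⟩ := interior_negDual_nonempty hKconv hKclosed hKcone hKpointed
  obtain ⟨δ, hδ, hgδ⟩ := exists_ball_le_neg_mul_norm hg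
  have hgK : ∀ k ∈ K, g k ≤ -δ * ‖k‖ := hgδ g (Metric.mem_ball_self hδ)
  have hCK : C ⊆ K := closure_minimal (convexHull_min (hAsub.trans sdiff_subset) hKconv) hKclosed
  have hCint : (interior C).Nonempty :=
    ⟨a₀ + a₀, interior_mono hAC (hssc (add_mem_add ha₀ (hAsub ha₀)))⟩
  intro x hx
  obtain ⟨s, hs, he⟩ := exists_sub_smul_mem_frontier
    (fun c hc => (hgK c (hCK hc)).trans (by nlinarith [norm_nonneg c])) hx
    (lt_zero_of_mem_interior_negDual hg (hAsub ha₀).1 (hAsub ha₀).2)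
  have heC : x - s • a₀ ∈ C := isClosed_closure.frontier_subset he
  obtain ⟨f, hf, hfmax⟩ := exists_isMaxOn_of_notMem_interior (convex_convexHull ℝ A).closure
    hCint he.2
  have hfmaxA : IsMaxOn f A (x - s • a₀) := hfmax.on_subset hAC
  obtain ⟨b, hb, hfb⟩ := hfmaxA.exists_mem_apply_eq heC hAclosed ⟨a₀, ha₀⟩ hδ
    fun a ha => hgK a (hAsub ha).1
  have hbmax : IsMaxOn f A b :=
    isMaxOn_iff.mpr fun y hy => (isMaxOn_iff.mp hfmaxA y hy).trans hfb.ge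
  have heb : x - s • a₀ = b :=
    (hdiff f (mem_interior_negDual_of_isMaxOn hKclosed hKcone hssc hf hb hbmax)).eq_of_isMaxOn
      heC (hAC hb) hfmaxA hbmax
  rw [← sub_add_cancel x (s • a₀), heb]
  exact hAK (add_mem_add hb (hKcone s hs a₀ (hAsub ha₀).1))

theorem forall_notMem_frontier_of_sigmaDiffAt [ProperSpace X] {K A : Set X}
    (hKclosed : IsClosed K) (hKcone : ∀ t : ℝ, 0 ≤ t → ∀ x ∈ K, t • x ∈ K)
    (hAne : A.Nonempty) (hAclosed : IsClosed A)
    (hAsub : A ⊆ K \ {0}) (hssc : A + (K \ {0}) ⊆ interior A) (hconv : Convex ℝ A)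
    (hdiff : ∀ f ∈ interior (negDual K), SigmaDiffAt A f) :
    ∀ a ∈ frontier A, ∀ a' ∈ frontier A, a ≠ a' →
      ∀ t : ℝ, t ∈ Ioo (0 : ℝ) 1 → t • a + (1 - t) • a' ∉ frontier A := by
  intro a ha a' ha' hne t ht hp
  have hAC : A ⊆ closure (convexHull ℝ A) := (subset_convexHull ℝ A).trans subset_closure
  obtain ⟨a₀, ha₀⟩ := hAne
  obtain ⟨f, hf, hfmax⟩ := exists_isMaxOn_of_notMem_interior hconv
    ⟨a₀ + a₀, hssc (add_mem_add ha₀ (hAsub ha₀))⟩ hp.2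
  have hdf := hdiff f (mem_interior_negDual_of_isMaxOn hKclosed hKcone hssc hf
    (hAclosed.frontier_subset hp) hfmax)
  -- `f` is affine on the segment and maximal at an interior point of it, hence at both ends
  have hfp : f (t • a + (1 - t) • a') = t * f a + (1 - t) * f a' := by simp
  have hfa := isMaxOn_iff.mp hfmax a (hAclosed.frontier_subset ha)
  have hfa' := isMaxOn_iff.mp hfmax a' (hAclosed.frontier_subset ha')
  have hmax : ∀ d, f (t • a + (1 - t) • a') ≤ f d → IsMaxOn f A d := fun d hd =>
    isMaxOn_iff.mpr fun y hy => (isMaxOn_iff.mp hfmax y hy).trans hd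
  exact hne (hdf.eq_of_isMaxOn (hAC (hAclosed.frontier_subset ha))
    (hAC (hAclosed.frontier_subset ha')) (hmax a (by nlinarith [ht.1, ht.2]))
    (hmax a' (by nlinarith [ht.1, ht.2])))

theorem stmt12_general [FiniteDimensional ℝ X]
    (K A : Set X)
    (hKconv : Convex ℝ K) (hKclosed : IsClosed K)
    (hKcone : ∀ t : ℝ, 0 ≤ t → ∀ x ∈ K, t • x ∈ K)
    (hKpointed : K ∩ (-K) = {0})
    (hAne : A.Nonempty) (hAclosed : IsClosed A)
    (hAK : A + K = A) (hAsub : A ⊆ K \ {0})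
    (hssc : A + (K \ {0}) ⊆ interior A) :
    (∀ f ∈ interior (negDual K), SigmaDiffAt A f) ↔
      (Convex ℝ A ∧
        ∀ a ∈ frontier A, ∀ a' ∈ frontier A, a ≠ a' →
          ∀ t : ℝ, t ∈ Ioo (0 : ℝ) 1 → t • a + (1 - t) • a' ∉ frontier A) := by
  constructor
  · intro hdiff
    have hAeq : closure (convexHull ℝ A) = A :=
      (closure_convexHull_subset_of_sigmaDiffAt hKconv hKclosed hKcone hKpointed hAne hAclosed
        hAK.le hAsub hssc hdiff).antisymm ((subset_convexHull ℝ A).trans subset_closure)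
    have hconv : Convex ℝ A := hAeq ▸ (convex_convexHull ℝ A).closure
    exact ⟨hconv, forall_notMem_frontier_of_sigmaDiffAt hKclosed hKcone hAne hAclosed hAsub hssc
      hconv hdiff⟩
  · rintro ⟨hconv, hseg⟩ f hf
    obtain ⟨a₀, ha₀⟩ := hAne
    have hf0 : f ≠ 0 := fun h =>
      (lt_zero_of_mem_interior_negDual hf (hAsub ha₀).1 (hAsub ha₀).2).ne (by simp [h])
    exact sigmaDiffAt_of_isMaxOn_unique hAclosed ⟨a₀, ha₀⟩ (hAsub.trans sdiff_subset) hf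
      fun c hc c' hc' => eq_of_isMaxOn_of_forall_notMem_frontier hconv hseg hf0 hc hc'

/-- Let `K, A` satisfy condition (H) in a finite-dimensional real normed
space, with `A ⊆ int K` and `A + (K \ {0}) ⊆ int A`. Then `σ_A` is differentiable at every
point of `int K⁻` iff `A` is convex and no open segment joining two distinct boundary
points of `A` meets the boundary of `A`. -/
theorem stmt12 [FiniteDimensional ℝ X] [Nontrivial X]
    (hdim : 2 ≤ Module.finrank ℝ X)
    (K A : Set X)
    (hKconv : Convex ℝ K) (hKclosed : IsClosed K)
    (hKcone : ∀ t : ℝ, 0 ≤ t → ∀ x ∈ K, t • x ∈ K)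
    (hKpointed : K ∩ (-K) = {0}) (hKint : (interior K).Nonempty)
    (hAne : A.Nonempty) (hAclosed : IsClosed A)
    (hAK : A + K = A) (hAsub : A ⊆ K \ {0})
    (hAint : A ⊆ interior K)
    (hssc : A + (K \ {0}) ⊆ interior A) :
    (∀ f ∈ interior (negDual K), SigmaDiffAt A f) ↔
      (Convex ℝ A ∧
        ∀ a ∈ frontier A, ∀ a' ∈ frontier A, a ≠ a' →
          ∀ t : ℝ, t ∈ Ioo (0 : ℝ) 1 → t • a + (1 - t) • a' ∉ frontier A) :=
  stmt12_general K A hKconv hKclosed hKcone hKpointed hAne hAclosed hAK hAsub hssc
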